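/- In the possibilistic Frauchiger–Renner empirical model on the 4-cycle with contexts {A,B}, {A,W}, {U,W}, {U,B} and binary outcomes, where the supports are: {A,B}: {00,10,11}; {A,W}: {00,01,10}; {U,W}: {00,01,10,11}; {U,B}: {00,01,11}, the local section (U,W) ↦ 11 does not extend to any global assignment s: {A,B,U,W} → {0,1} consistent with all supports; hence the model is logically (possibilistically) contextual. -/
import Mathlib

/-- The possibilistic Frauchiger–Renner model on the 4-cycle (0=A, 1=B, 2=U, 3=W)
with supports {A,B}: {00,10,11}; {A,W}: {00,01,10}; {U,W}: all; {U,B}: {00,01,11}.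
The local section (U,W) ↦ 11 admits no extension to a consistent global
assignment: the model is logically contextual. -/
theorem stmt_16 :
    ¬ ∃ s : Fin 4 → Bool,
      s 2 = true ∧ s 3 = true ∧                -- the local section 11 on {U,W}
      ¬ (s 0 = false ∧ s 1 = true) ∧           -- {A,B}: support {00,10,11}
      ¬ (s 0 = true ∧ s 3 = true) ∧            -- {A,W}: support {00,01,10}
      ¬ (s 2 = true ∧ s 1 = false)             -- {U,B}: support {00,01,11}
    := by
  rintro ⟨s, h2, h3, hAB, hAW, hUB⟩
  cases h0 : s 0 <;> cases h1 : s 1 <;> simp_all
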